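/- Let B be a trimmed right double extension of A with data (P, σ) and p₁₂ ≠ 0. Define the left B-module maps g : B → B ⊕ B, g(c) = (c(p₁₁y₁ − y₂), c·p₁₂·y₁), and f : B ⊕ B → B, f(a, b) = ay₁ + by₂. Then: (i) g is injective; (ii) the range of g equals the kernel of f; (iii) the range of f equals the left ideal By₁ + By₂; and (iv) B = A ⊕ (By₁ + By₂) as k-vector spaces, i.e. A ∩ (By₁ + By₂) = 0 and A + By₁ + By₂ = B. In other words, 0 → B → B ⊕ B → B → B/(By₁ + By₂) → 0 is an exact sequence of left B-modules, and B/(By₁ + By₂) ≅ A. -/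

import Mathlib

/-- A right double extension `B` of a subalgebra `A ⊆ B` with DE-data `(P, σ, δ, τ)`. -/
structure RightDoubleExtension (k : Type*) [Field k] {B : Type*} [Ring B] [Algebra k B]
    (A : Subalgebra k B) where
  y₁ : B
  y₂ : B
  σ₁₁ : A →ₗ[k] A
  σ₁₂ : A →ₗ[k] A
  σ₂₁ : A →ₗ[k] A
  σ₂₂ : A →ₗ[k] A
  δ₁ : A →ₗ[k] A
  δ₂ : A →ₗ[k] A
  p₁₂ : k
  p₁₁ : k
  τ₁ : A
  τ₂ : A
  τ₀ : A
  R1 : y₂ * y₁ = p₁₂ • (y₁ * y₂) + p₁₁ • (y₁ * y₁)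
      + (τ₁ : B) * y₁ + (τ₂ : B) * y₂ + (τ₀ : B)
  R2₁ : ∀ r : A, y₁ * (r : B) = (σ₁₁ r : B) * y₁ + (σ₁₂ r : B) * y₂ + (δ₁ r : B)
  R2₂ : ∀ r : A, y₂ * (r : B) = (σ₂₁ r : B) * y₁ + (σ₂₂ r : B) * y₂ + (δ₂ r : B)
  basis : ∀ b : B, ∃! f : ℕ × ℕ →₀ A,
      b = f.sum fun n a => (a : B) * (y₁ ^ n.1 * y₂ ^ n.2)


/-! Right multiplication by `y₂` shifts the monomial basis `y₁ⁱ y₂ʲ` of `B` over `A`, and the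
trimmed relation `y₂ y₁ = p₁₂ y₁ y₂ + p₁₁ y₁²` gives, by induction on `j`,
`y₁ⁱ y₂ʲ · y₁ = p₁₂ʲ y₁ⁱ⁺¹ y₂ʲ` modulo monomials of smaller `y₂`-degree and positive `y₁`-degree.
Comparing coefficients in top `y₂`-degree shows that `y₁` is right regular when `p₁₂ ≠ 0`, which
gives (i). Every monomial other than `1` lies in `By₁ + By₂`, while `By₁ + By₂` has no constant
term: this is (iv). For (ii), induction on the `y₂`-degree gives `B = ⊕ᵢ A y₁ⁱ + B(p₁₁y₁ − y₂)`;
subtracting a suitable `g(c)` from `(u, v) ∈ ker f` puts `u` in `⊕ᵢ A y₁ⁱ`, and then `u y₁` has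
`y₂`-degree `0` while `v y₂` has no terms there, so both vanish. -/

namespace RightDoubleExtension

variable {k : Type*} [Field k] {B : Type*} [Ring B] [Algebra k B] {A : Subalgebra k B}
  (E : RightDoubleExtension k A)

def monomial (n : ℕ × ℕ) : B := E.y₁ ^ n.1 * E.y₂ ^ n.2

lemma monomial_zero : E.monomial 0 = 1 := by simp [monomial]

lemma monomial_mul_y₂ (n : ℕ × ℕ) : E.monomial n * E.y₂ = E.monomial (n.1, n.2 + 1) := by
  simp [monomial, pow_succ, mul_assoc]

lemma monomial_succ_zero (i : ℕ) : E.monomial (i + 1, 0) = E.monomial (i, 0) * E.y₁ := by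
  simp [monomial, pow_succ]

lemma linearIndependent_monomial : LinearIndependent A E.monomial := by
  refine linearIndependent_iff.2 fun l hl => (E.basis 0).unique ?_ (by simp)
  rw [← hl, Finsupp.linearCombination_apply]
  rfl

lemma span_monomial : ⊤ ≤ Submodule.span A (Set.range E.monomial) := fun x _ => by
  obtain ⟨f, hf, -⟩ := E.basis x
  exact Finsupp.mem_span_range_iff_exists_finsupp.2 ⟨f, hf.symm⟩

noncomputable def monomialBasis : Module.Basis (ℕ × ℕ) A B :=
  .mk E.linearIndependent_monomial E.span_monomial

@[simp]
lemma coe_monomialBasis : ⇑E.monomialBasis = E.monomial :=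
  funext <| Module.Basis.mk_apply _ _

def monomialSpan (S : Set (ℕ × ℕ)) : Submodule A B := Submodule.span A (E.monomial '' S)

lemma mem_monomialSpan_iff {S : Set (ℕ × ℕ)} {x : B} :
    x ∈ E.monomialSpan S ↔ ↑(E.monomialBasis.repr x).support ⊆ S := by
  rw [← E.monomialBasis.mem_span_image, coe_monomialBasis, monomialSpan]

lemma monomial_mem_monomialSpan {S : Set (ℕ × ℕ)} {n : ℕ × ℕ} (hn : n ∈ S) :
    E.monomial n ∈ E.monomialSpan S :=
  Submodule.subset_span ⟨n, hn, rfl⟩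

lemma monomialSpan_mono {S T : Set (ℕ × ℕ)} (h : S ⊆ T) : E.monomialSpan S ≤ E.monomialSpan T :=
  Submodule.span_mono (Set.image_mono h)

lemma mem_monomialSpan_univ (x : B) : x ∈ E.monomialSpan Set.univ := by
  rw [monomialSpan, Set.image_univ]
  exact E.span_monomial Submodule.mem_top

lemma eq_zero_of_mem_monomialSpan {S T : Set (ℕ × ℕ)} (hST : Disjoint S T) {x : B}
    (hS : x ∈ E.monomialSpan S) (hT : x ∈ E.monomialSpan T) : x = 0 :=
  Submodule.disjoint_def.1 (E.linearIndependent_monomial.disjoint_span_image hST) x hS hT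

lemma mem_of_forall_monomial_mem {M : Submodule A B} (h : ∀ n, E.monomial n ∈ M) (x : B) :
    x ∈ M :=
  Submodule.span_le.2 (Set.range_subset_iff.2 h) (E.span_monomial Submodule.mem_top)

lemma mul_mem_of_mem_monomialSpan {S : Set (ℕ × ℕ)} {z : B} {M : Submodule A B}
    (h : ∀ n ∈ S, E.monomial n * z ∈ M) {x : B} (hx : x ∈ E.monomialSpan S) : x * z ∈ M :=
  (Submodule.span_le (p := M.comap (LinearMap.mulRight A z))).2
    (by rintro _ ⟨n, hn, rfl⟩; exact h n hn) hx

lemma repr_mul_y₂ (x : B) (n : ℕ × ℕ) :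
    E.monomialBasis.repr (x * E.y₂) (n.1, n.2 + 1) = E.monomialBasis.repr x n := by
  have := E.monomialBasis.ext (f₁ := Finsupp.lapply (n.1, n.2 + 1) ∘ₗ
      E.monomialBasis.repr.toLinearMap ∘ₗ LinearMap.mulRight A E.y₂)
    (f₂ := Finsupp.lapply n ∘ₗ E.monomialBasis.repr.toLinearMap) fun m => by
    simp only [LinearMap.comp_apply, LinearMap.mulRight_apply, LinearEquiv.coe_coe,
      Finsupp.lapply_apply, coe_monomialBasis, monomial_mul_y₂]
    rw [← coe_monomialBasis, Module.Basis.repr_self, Module.Basis.repr_self]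
    simp [Finsupp.single_apply, Prod.ext_iff]
  exact LinearMap.congr_fun this x

lemma exists_mem_monomialSpan_repr_ne_zero {x : B} (hx : x ≠ 0) :
    ∃ D i, x ∈ E.monomialSpan {m | m.2 ≤ D} ∧ E.monomialBasis.repr x (i, D) ≠ 0 := by
  have hsupp : (E.monomialBasis.repr x).support.Nonempty := by simpa using hx
  obtain ⟨n, hn, hD⟩ := (E.monomialBasis.repr x).support.exists_mem_eq_sup hsupp Prod.snd
  refine ⟨n.2, n.1, E.mem_monomialSpan_iff.2 fun m hm => ?_, Finsupp.mem_support_iff.1 hn⟩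
  exact hD ▸ Finset.le_sup (f := Prod.snd) hm

lemma mul_y₂_eq_zero {x : B} (hx : x * E.y₂ = 0) : x = 0 :=
  E.monomialBasis.ext_elem fun n => by simp [← repr_mul_y₂, hx]

lemma monomial_mul_y₁_mem_of_sub_mem {n : ℕ × ℕ} {p : k} {j : ℕ} (hj : n.2 < j)
    (h : E.monomial n * E.y₁ - p • E.monomial (n.1 + 1, n.2) ∈
      E.monomialSpan {m | 1 ≤ m.1 ∧ m.2 < n.2}) :
    E.monomial n * E.y₁ ∈ E.monomialSpan {m | 1 ≤ m.1 ∧ m.2 < j} := by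
  rw [← sub_add_cancel (E.monomial n * E.y₁) (p • E.monomial (n.1 + 1, n.2))]
  refine add_mem (E.monomialSpan_mono ?_ h)
    (Submodule.smul_of_tower_mem _ p (E.monomial_mem_monomialSpan ?_))
  · exact fun m hm => ⟨hm.1, hm.2.trans hj⟩
  · exact ⟨le_add_self, hj⟩

lemma y₂_mul_y₁_of_trimmed (hτ₁ : E.τ₁ = 0) (hτ₂ : E.τ₂ = 0) (hτ₀ : E.τ₀ = 0) :
    E.y₂ * E.y₁ = E.p₁₂ • (E.y₁ * E.y₂) + E.p₁₁ • (E.y₁ * E.y₁) := by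
  simpa [hτ₁, hτ₂, hτ₀] using E.R1

-- The maps `g` and `f` of the exact sequence.
def syzygy (c : B) : B × B := (c * (E.p₁₁ • E.y₁ - E.y₂), E.p₁₂ • (c * E.y₁))

def linComb (x : B × B) : B := x.1 * E.y₁ + x.2 * E.y₂

section Trimmed

variable (hrel : E.y₂ * E.y₁ = E.p₁₂ • (E.y₁ * E.y₂) + E.p₁₁ • (E.y₁ * E.y₁))
include hrel

lemma monomial_mul_y₁_sub_mem (n : ℕ × ℕ) :
    E.monomial n * E.y₁ - E.p₁₂ ^ n.2 • E.monomial (n.1 + 1, n.2) ∈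
      E.monomialSpan {m | 1 ≤ m.1 ∧ m.2 < n.2} := by
  obtain ⟨i, j⟩ := n
  induction j using Nat.strong_induction_on generalizing i with
  | _ j ih =>
  cases j with
  | zero => simp [monomial, pow_succ]
  | succ j =>
    set r := E.monomial (i, j) * E.y₁ - E.p₁₂ ^ j • E.monomial (i + 1, j)
    have hr : r ∈ E.monomialSpan {m | 1 ≤ m.1 ∧ m.2 < j} := ih j j.lt_succ_self i
    have hexpand : E.monomial (i, j + 1) * E.y₁ - E.p₁₂ ^ (j + 1) • E.monomial (i + 1, j + 1) =
        E.p₁₂ • (r * E.y₂) + E.p₁₁ • (E.monomial (i, j) * E.y₁ * E.y₁) := by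
      rw [← E.monomial_mul_y₂ (i, j), ← E.monomial_mul_y₂ (i + 1, j), mul_assoc, hrel]
      simp only [r, sub_mul, smul_mul_assoc, mul_add, mul_smul_comm, ← mul_assoc, smul_sub,
        smul_smul, pow_succ']
      abel
    have hlow : ∀ m : ℕ × ℕ, m.2 < j + 1 →
        E.monomial m * E.y₁ ∈ E.monomialSpan {m' | 1 ≤ m'.1 ∧ m'.2 < j + 1} :=
      fun m hm => E.monomial_mul_y₁_mem_of_sub_mem hm (ih m.2 hm m.1)
    rw [hexpand]
    refine add_mem (Submodule.smul_of_tower_mem _ _ ?_) (Submodule.smul_of_tower_mem _ _ ?_)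
    · refine E.mul_mem_of_mem_monomialSpan (fun m hm => ?_) hr
      rw [monomial_mul_y₂]
      exact E.monomial_mem_monomialSpan ⟨hm.1, Nat.succ_lt_succ hm.2⟩
    · exact E.mul_mem_of_mem_monomialSpan (fun m hm => hlow m hm.2) (hlow (i, j) j.lt_succ_self)

lemma monomial_mul_y₁_mem (n : ℕ × ℕ) :
    E.monomial n * E.y₁ ∈ E.monomialSpan {m | 1 ≤ m.1 ∧ m.2 ≤ n.2} := by
  simpa only [Nat.lt_succ_iff] using
    E.monomial_mul_y₁_mem_of_sub_mem n.2.lt_succ_self (E.monomial_mul_y₁_sub_mem hrel n)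

lemma repr_mul_y₁_of_mem_monomialSpan {D : ℕ} {x : B} (hx : x ∈ E.monomialSpan {m | m.2 ≤ D})
    (i : ℕ) :
    E.monomialBasis.repr (x * E.y₁) (i + 1, D) = E.p₁₂ ^ D • E.monomialBasis.repr x (i, D) := by
  induction hx using Submodule.span_induction with
  | mem _ hm =>
    obtain ⟨m, hmD, rfl⟩ := hm
    set r := E.monomial m * E.y₁ - E.p₁₂ ^ m.2 • E.monomial (m.1 + 1, m.2)
    have hr : E.monomialBasis.repr r (i + 1, D) = 0 :=
      Finsupp.notMem_support_iff.1 fun h =>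
        (E.mem_monomialSpan_iff.1 (E.monomial_mul_y₁_sub_mem hrel m) h).2.not_ge hmD
    rw [← sub_add_cancel (E.monomial m * E.y₁) (E.p₁₂ ^ m.2 • E.monomial (m.1 + 1, m.2)),
      map_add, Finsupp.add_apply, hr, zero_add, LinearMapClass.map_smul_of_tower,
      ← coe_monomialBasis, Module.Basis.repr_self, Module.Basis.repr_self]
    by_cases hm : m = (i, D)
    · simp [hm]
    · have hm' : (m.1 + 1, m.2) ≠ (i + 1, D) := fun h => hm (by simpa [Prod.ext_iff] using h)
      simp [hm, hm']
  | zero => simp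
  | add x y _ _ hx hy => simp [add_mul, hx, hy]
  | smul a x _ hx => simp [smul_mul_assoc, hx]

lemma mul_y₁_eq_zero (hp : E.p₁₂ ≠ 0) {x : B} (hx : x * E.y₁ = 0) : x = 0 := by
  by_contra hx0
  obtain ⟨D, i, hD, hi⟩ := E.exists_mem_monomialSpan_repr_ne_zero hx0
  have h := E.repr_mul_y₁_of_mem_monomialSpan hrel hD i
  rw [hx, map_zero, Finsupp.zero_apply, eq_comm, smul_eq_zero] at h
  exact h.elim (pow_ne_zero D hp) hi

lemma syzygy_injective (hp : E.p₁₂ ≠ 0) : Function.Injective E.syzygy := fun c c' h => by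
  have h₂ : E.p₁₂ • (c * E.y₁) = E.p₁₂ • (c' * E.y₁) := congrArg Prod.snd h
  rw [← sub_eq_zero]
  exact E.mul_y₁_eq_zero hrel hp (by rw [sub_mul, smul_right_injective B hp h₂, sub_self])

lemma linComb_syzygy (c : B) : E.linComb (E.syzygy c) = 0 := by
  have h : (E.p₁₁ • E.y₁ - E.y₂) * E.y₁ + E.p₁₂ • (E.y₁ * E.y₂) = 0 := by
    rw [sub_mul, smul_mul_assoc, hrel]
    abel
  rw [linComb, syzygy, smul_mul_assoc, mul_assoc, mul_assoc, ← mul_smul_comm, ← mul_add, h,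
    mul_zero]

lemma mem_monomialSpan_sup_range_mulRight (x : B) :
    x ∈ E.monomialSpan {m | m.2 = 0} ⊔
      LinearMap.range (LinearMap.mulRight A (E.p₁₁ • E.y₁ - E.y₂)) := by
  refine E.mem_of_forall_monomial_mem (fun ⟨i, j⟩ => ?_) x
  induction j using Nat.strong_induction_on generalizing i with
  | _ j ih =>
  cases j with
  | zero => exact Submodule.mem_sup_left (E.monomial_mem_monomialSpan rfl)
  | succ j =>
    have hlow : E.monomial (i, j) * E.y₁ ∈ E.monomialSpan {m | m.2 < j + 1} :=
      E.monomialSpan_mono (fun m hm => Nat.lt_succ_of_le hm.2) (E.monomial_mul_y₁_mem hrel (i, j))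
    have hsplit : E.monomial (i, j + 1) =
        E.p₁₁ • (E.monomial (i, j) * E.y₁) - E.monomial (i, j) * (E.p₁₁ • E.y₁ - E.y₂) := by
      rw [← E.monomial_mul_y₂ (i, j), mul_sub, mul_smul_comm]
      abel
    rw [hsplit]
    refine sub_mem (Submodule.smul_of_tower_mem _ _ ?_)
      (Submodule.mem_sup_right (LinearMap.mem_range_self _ _))
    refine (Submodule.span_le.2 ?_) hlow
    rintro _ ⟨m, hm, rfl⟩
    exact ih m.2 hm m.1

lemma exists_syzygy_eq_of_linComb_eq_zero (hp : E.p₁₂ ≠ 0) {x : B × B}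
    (hx : E.linComb x = 0) : ∃ c, E.syzygy c = x := by
  obtain ⟨d, hd, _, ⟨c, rfl⟩, hdc⟩ :=
    Submodule.mem_sup.1 (E.mem_monomialSpan_sup_range_mulRight hrel x.1)
  rw [LinearMap.mulRight_apply] at hdc
  set v := x.2 - E.p₁₂ • (c * E.y₁)
  have hker : d * E.y₁ + v * E.y₂ = 0 := by
    calc d * E.y₁ + v * E.y₂ = E.linComb x - E.linComb (E.syzygy c) := by
          simp only [linComb, syzygy, v, ← hdc, add_mul, sub_mul]
          abel
      _ = 0 := by rw [hx, E.linComb_syzygy hrel, sub_zero]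
  have hdy₁ : d * E.y₁ ∈ E.monomialSpan {m | m.2 = 0} :=
    E.mul_mem_of_mem_monomialSpan (fun m hm => E.monomialSpan_mono
      (fun _ hm' => Nat.le_zero.1 (hm'.2.trans_eq hm)) (E.monomial_mul_y₁_mem hrel m)) hd
  have hvy₂ : v * E.y₂ ∈ E.monomialSpan {m | m.2 ≠ 0} :=
    E.mul_mem_of_mem_monomialSpan (fun m _ => by
      rw [monomial_mul_y₂]
      exact E.monomial_mem_monomialSpan m.2.succ_ne_zero) (E.mem_monomialSpan_univ v)
  have hdy₁0 : d * E.y₁ = 0 :=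
    E.eq_zero_of_mem_monomialSpan (T := {m | m.2 ≠ 0})
      (Set.disjoint_left.2 fun _ h h' => h' h) hdy₁ (eq_neg_of_add_eq_zero_left hker ▸ neg_mem hvy₂)
  have hd0 : d = 0 := E.mul_y₁_eq_zero hrel hp hdy₁0
  have hv0 : v = 0 := E.mul_y₂_eq_zero (by rwa [hdy₁0, zero_add] at hker)
  exact ⟨c, Prod.ext (by simp [syzygy, ← hdc, hd0]) (sub_eq_zero.1 hv0).symm⟩

lemma linComb_eq_zero_iff (hp : E.p₁₂ ≠ 0) (x : B × B) :
    E.linComb x = 0 ↔ ∃ c, E.syzygy c = x :=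
  ⟨E.exists_syzygy_eq_of_linComb_eq_zero hrel hp, fun ⟨c, hc⟩ => hc ▸ E.linComb_syzygy hrel c⟩

lemma eq_zero_of_coe_mem_span {a : A} (ha : (a : B) ∈ Submodule.span B {E.y₁, E.y₂}) :
    a = 0 := by
  obtain ⟨c, d, hcd⟩ := Submodule.mem_span_pair.1 ha
  have hconst : (a : B) ∈ E.monomialSpan {0} := by
    rw [← mul_one (a : B), ← E.monomial_zero]
    exact Submodule.smul_mem _ a (E.monomial_mem_monomialSpan rfl)
  have hpos : (a : B) ∈ E.monomialSpan {m | m ≠ 0} := by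
    rw [← hcd, smul_eq_mul, smul_eq_mul]
    refine add_mem (E.mul_mem_of_mem_monomialSpan (fun m _ => E.monomialSpan_mono ?_
      (E.monomial_mul_y₁_mem hrel m)) (E.mem_monomialSpan_univ c))
      (E.mul_mem_of_mem_monomialSpan (fun m _ => ?_) (E.mem_monomialSpan_univ d))
    · rintro _ hm' rfl
      exact absurd hm'.1 (by simp)
    · rw [monomial_mul_y₂]
      exact E.monomial_mem_monomialSpan (by simp [Prod.ext_iff])
  exact_mod_cast E.eq_zero_of_mem_monomialSpan (by simp) hconst hpos

end Trimmed

lemma exists_sub_mem_span (b : B) : ∃ a : A, b - a ∈ Submodule.span B {E.y₁, E.y₂} := by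
  set J := (Submodule.span B {E.y₁, E.y₂}).restrictScalars A
  have hmul : ∀ z y : B, y ∈ ({E.y₁, E.y₂} : Set B) → z * y ∈ J :=
    fun z y hy => Submodule.smul_mem _ z (Submodule.subset_span hy)
  have hmonomial : ∀ n, E.monomial n ∈ Submodule.span A {1} ⊔ J := by
    rintro ⟨i, _ | j⟩
    · cases i with
      | zero => exact Submodule.mem_sup_left (Submodule.subset_span E.monomial_zero)
      | succ i => exact Submodule.mem_sup_right (E.monomial_succ_zero i ▸ hmul _ _ (by simp))
    · exact Submodule.mem_sup_right (E.monomial_mul_y₂ (i, j) ▸ hmul _ _ (by simp))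
  obtain ⟨_, ha, z, hz, hb⟩ := Submodule.mem_sup.1 (E.mem_of_forall_monomial_mem hmonomial b)
  obtain ⟨a, rfl⟩ := Submodule.mem_span_singleton.1 ha
  refine ⟨a, ?_⟩
  rwa [← hb, Subalgebra.smul_def, smul_eq_mul, mul_one, add_sub_cancel_left]

end RightDoubleExtension

theorem trimmed_exact_sequence_general
    {k : Type*} [Field k] {B : Type*} [Ring B] [Algebra k B]
    {A : Subalgebra k B} (E : RightDoubleExtension k A)
    (hτ₁ : E.τ₁ = 0) (hτ₂ : E.τ₂ = 0) (hτ₀ : E.τ₀ = 0)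
    (hp : E.p₁₂ ≠ 0) :
    -- (i) g is injective
    Function.Injective
      (fun c : B => (c * (E.p₁₁ • E.y₁ - E.y₂), E.p₁₂ • (c * E.y₁))) ∧
    -- (ii) range g = ker f
    (∀ x : B × B, x.1 * E.y₁ + x.2 * E.y₂ = 0 ↔
      ∃ c : B, (c * (E.p₁₁ • E.y₁ - E.y₂), E.p₁₂ • (c * E.y₁)) = x) ∧
    -- (iii) range f = By₁ + By₂
    (∀ b : B, (∃ x : B × B, x.1 * E.y₁ + x.2 * E.y₂ = b) ↔
      b ∈ Submodule.span B ({E.y₁, E.y₂} : Set B)) ∧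
    -- (iv) B = A ⊕ (By₁ + By₂)
    ((∀ a : A, (a : B) ∈ Submodule.span B ({E.y₁, E.y₂} : Set B) → a = 0) ∧
     (∀ b : B, ∃ a : A, b - (a : B) ∈ Submodule.span B ({E.y₁, E.y₂} : Set B))) := by
  have hrel := E.y₂_mul_y₁_of_trimmed hτ₁ hτ₂ hτ₀
  refine ⟨E.syzygy_injective hrel hp, E.linComb_eq_zero_iff hrel hp, fun b => ?_,
    fun _ => E.eq_zero_of_coe_mem_span hrel, E.exists_sub_mem_span⟩
  rw [Submodule.mem_span_pair]
  exact ⟨fun ⟨x, hx⟩ => ⟨x.1, x.2, hx⟩, fun ⟨c, d, h⟩ => ⟨(c, d), h⟩⟩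

/-- For a trimmed right double extension with `p₁₂ ≠ 0`, the sequence
`0 → B --g--> B ⊕ B --f--> B → B/(By₁+By₂) → 0`, with
`g(c) = (c(p₁₁y₁ − y₂), c·p₁₂y₁)` and `f(a,b) = ay₁ + by₂`, is exact, and
`B/(By₁ + By₂) ≅ A`, i.e. `B = A ⊕ (By₁ + By₂)`. -/
theorem trimmed_exact_sequence
    {k : Type*} [Field k] {B : Type*} [Ring B] [Algebra k B]
    {A : Subalgebra k B} (E : RightDoubleExtension k A)
    (hδ₁ : E.δ₁ = 0) (hδ₂ : E.δ₂ = 0)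
    (hτ₁ : E.τ₁ = 0) (hτ₂ : E.τ₂ = 0) (hτ₀ : E.τ₀ = 0)
    (hp : E.p₁₂ ≠ 0) :
    -- (i) g is injective
    Function.Injective
      (fun c : B => (c * (E.p₁₁ • E.y₁ - E.y₂), E.p₁₂ • (c * E.y₁))) ∧
    -- (ii) range g = ker f
    (∀ x : B × B, x.1 * E.y₁ + x.2 * E.y₂ = 0 ↔
      ∃ c : B, (c * (E.p₁₁ • E.y₁ - E.y₂), E.p₁₂ • (c * E.y₁)) = x) ∧
    -- (iii) range f = By₁ + By₂
    (∀ b : B, (∃ x : B × B, x.1 * E.y₁ + x.2 * E.y₂ = b) ↔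
      b ∈ Submodule.span B ({E.y₁, E.y₂} : Set B)) ∧
    -- (iv) B = A ⊕ (By₁ + By₂)
    ((∀ a : A, (a : B) ∈ Submodule.span B ({E.y₁, E.y₂} : Set B) → a = 0) ∧
     (∀ b : B, ∃ a : A, b - (a : B) ∈ Submodule.span B ({E.y₁, E.y₂} : Set B))) :=
  trimmed_exact_sequence_general E hτ₁ hτ₂ hτ₀ hp
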